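/- Uniqueness of the generic structure: if M and M' are two countably infinite graphs, each of which (i) is the union of an increasing chain of finite self-sufficient subsets, (ii) has the property that every isomorphism between finite self-sufficient induced subgraphs extends to an automorphism, and (iii) realizes every graph in K₀ as the induced subgraph on some finite self-sufficient subset, then M and M' are isomorphic. -/

import Mathlib

open scoped Cardinal

/-- Number of edges of the graph `G` with both endpoints in `A`
(ordered pairs counted and divided by two). -/
noncomputable def edgeCount {V : Type*} (G : SimpleGraph V) (A : Set V) : ℕ :=
  {p : V × V | p.1 ∈ A ∧ p.2 ∈ A ∧ G.Adj p.1 p.2}.ncard / 2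

/-- The pre-dimension `δ(A) = m·|A| − e(A)`. -/
noncomputable def delta {V : Type*} (m : ℕ) (G : SimpleGraph V) (A : Set V) : ℤ :=
  (m : ℤ) * A.ncard - edgeCount G A

/-- `A` is self-sufficient (`≤`-closed) in `B`:  `A ⊆ B` and `δ(A') ≥ δ(A)` for
every finite `A'` with `A ⊆ A' ⊆ B`. -/
def SelfSuff {V : Type*} (m : ℕ) (G : SimpleGraph V) (A B : Set V) : Prop :=
  A ⊆ B ∧ ∀ A' : Set V, A'.Finite → A ⊆ A' → A' ⊆ B → delta m G A ≤ delta m G A'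

/-- A graph belongs to the class `K₀` if `δ(A') ≥ 0` for every set `A'` of its
vertices (used for finite graphs). -/
def InK0 {V : Type*} (m : ℕ) (G : SimpleGraph V) : Prop :=
  ∀ A : Set V, 0 ≤ delta m G A

/-- `G` is a `(K₀,≤)`-generic graph: (i) it is the union of an increasing chain of
finite self-sufficient subsets; (ii) every isomorphism between finite self-sufficient
induced subgraphs extends to an automorphism; (iii) every finite graph in `K₀` is
isomorphic to the induced subgraph on some finite self-sufficient subset. -/
def IsGeneric (m : ℕ) {V : Type} (G : SimpleGraph V) : Prop :=
  (∃ F : ℕ → Set V, (∀ n, (F n).Finite) ∧ (∀ n, F n ⊆ F (n + 1)) ∧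
      (∀ n, SelfSuff m G (F n) Set.univ) ∧ (⋃ n, F n) = Set.univ) ∧
  (∀ A B : Set V, A.Finite → B.Finite → SelfSuff m G A Set.univ → SelfSuff m G B Set.univ →
      ∀ e : G.induce A ≃g G.induce B, ∃ g : G ≃g G, ∀ a : A, g a = (e a : V)) ∧
  (∀ (W : Type) (_ : Fintype W) (H : SimpleGraph W), InK0 m H →
      ∃ s : Set V, s.Finite ∧ SelfSuff m G s Set.univ ∧ Nonempty (H ≃g G.induce s))

/-- The self-sufficient closure `cl(A)`: the intersection of all finite
self-sufficient subsets of the ambient graph containing `A` (which is the smallest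
such set whenever a smallest one exists). -/
def scl {V : Type*} (m : ℕ) (G : SimpleGraph V) (A : Set V) : Set V :=
  ⋂₀ {B : Set V | A ⊆ B ∧ B.Finite ∧ SelfSuff m G B Set.univ}

/-- The dimension `d(A) = δ(cl(A))`. -/
noncomputable def gdim {V : Type*} (m : ℕ) (G : SimpleGraph V) (A : Set V) : ℤ :=
  delta m G (scl m G A)

/-- The geometric closure
`gcl(X) = { v : d(A ∪ {v}) = d(A) for some finite A ⊆ X }`. -/
def gcl {V : Type*} (m : ℕ) (G : SimpleGraph V) (X : Set V) : Set V :=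
  {v | ∃ A : Set V, A ⊆ X ∧ A.Finite ∧ gdim m G (A ∪ {v}) = gdim m G A}

/-- The pointwise stabilizer `Aut_A(M)` of a set `A` of vertices, as a subgroup of
the automorphism group. -/
def pointStab {V : Type*} (G : SimpleGraph V) (A : Set V) : Subgroup (G ≃g G) where
  carrier := {g | ∀ a ∈ A, g a = a}
  one_mem' := fun a _ => rfl
  mul_mem' := by
    intro g h hg hh a ha
    show g (h a) = a
    rw [hh a ha, hg a ha]
  inv_mem' := by
    intro g hg a ha
    show g⁻¹ a = a
    conv_lhs => rw [← hg a ha]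
    simp

/-- The setwise stabilizer `Aut_{{X}}(M) = { g : g[X] = X }` of a set `X` of
vertices, as a subgroup of the automorphism group. -/
def setStab {V : Type*} (G : SimpleGraph V) (X : Set V) : Subgroup (G ≃g G) where
  carrier := {g | (fun v => g v) '' X = X}
  one_mem' := by simp
  mul_mem' := by
    intro g h hg hh
    show (fun v => g (h v)) '' X = X
    rw [show (fun v => g (h v)) = (fun v => g v) ∘ (fun v => h v) from rfl,
      Set.image_comp, hh, hg]
  inv_mem' := by
    intro g hg
    show (fun v => g⁻¹ v) '' X = X
    conv_lhs => rw [← hg]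
    rw [← Set.image_comp]
    have : (fun v => g⁻¹ v) ∘ (fun v => g v) = id := by
      funext v
      show g⁻¹ (g v) = v
      simp
    rw [this, Set.image_id]

/-- The topology of pointwise convergence on the automorphism group of a graph
(the vertex set being discrete). -/
def autTop (V : Type*) (G : SimpleGraph V) : TopologicalSpace (G ≃g G) :=
  TopologicalSpace.induced (fun g => (g : V → V))
    (@Pi.topologicalSpace V (fun _ => V) (fun _ => ⊥))

/-! Back and forth between finite partial isomorphisms whose domain and codomain are
self-sufficient. Such a partial isomorphism `p` extends to any finite `B ⊇ dom p` with
`B ≤ M`: the graph `G[B]` lies in `K₀` because `∅ ≤ M`, so it is realized as a self-sufficient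
`t` in `M'`; by transitivity of `≤` (submodularity of `δ`) the copy of `dom p` inside `t` is
self-sufficient in `M'`, and an automorphism of `M'` matching that copy with `cod p` carries
`t` onto the codomain of the extension. -/

open Set SimpleGraph

section Delta

variable {U V : Type*} {m : ℕ} {H : SimpleGraph U} {G : SimpleGraph V}

def adjPairs (G : SimpleGraph V) (A : Set V) : Set (V × V) :=
  {p | p.1 ∈ A ∧ p.2 ∈ A ∧ G.Adj p.1 p.2}

lemma even_ncard_adjPairs {A : Set V} (hA : A.Finite) : Even (adjPairs G A).ncard := by
  classical
  have := hA.fintype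
  let e : adjPairs G A ≃ (G.induce A).Dart :=
    { toFun := fun p => ⟨(⟨p.1.1, p.2.1⟩, ⟨p.1.2, p.2.2.1⟩), p.2.2.2⟩
      invFun := fun d => ⟨(d.fst, d.snd), d.fst.2, d.snd.2, d.adj⟩
      left_inv := fun _ => rfl
      right_inv := fun _ => rfl }
  rw [← Nat.card_coe_set_eq, Nat.card_congr e, Nat.card_eq_fintype_card,
    dart_card_eq_twice_card_edges]
  exact even_two_mul _

lemma two_mul_edgeCount {A : Set V} (hA : A.Finite) :
    2 * edgeCount G A = (adjPairs G A).ncard :=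
  Nat.two_mul_div_two_of_even (even_ncard_adjPairs hA)

lemma ncard_adjPairs_add_le {X Y : Set V} (hX : X.Finite) (hY : Y.Finite) :
    (adjPairs G X).ncard + (adjPairs G Y).ncard ≤
      (adjPairs G (X ∪ Y)).ncard + (adjPairs G (X ∩ Y)).ncard := by
  have hfin : ∀ {Z : Set V}, Z.Finite → (adjPairs G Z).Finite := fun hZ =>
    (hZ.prod hZ).subset fun p hp => ⟨hp.1, hp.2.1⟩
  have hinter : adjPairs G X ∩ adjPairs G Y = adjPairs G (X ∩ Y) := by
    ext p; simp only [adjPairs, mem_inter_iff, mem_ofPred_eq]; tauto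
  have hunion : adjPairs G X ∪ adjPairs G Y ⊆ adjPairs G (X ∪ Y) := by
    rintro p (⟨h₁, h₂, h⟩ | ⟨h₁, h₂, h⟩)
    exacts [⟨.inl h₁, .inl h₂, h⟩, ⟨.inr h₁, .inr h₂, h⟩]
  rw [← ncard_union_add_ncard_inter _ _ (hfin hX) (hfin hY), hinter]
  gcongr
  exact hfin (hX.union hY)

lemma delta_union_add_delta_inter_le {X Y : Set V} (hX : X.Finite) (hY : Y.Finite) :
    delta m G (X ∪ Y) + delta m G (X ∩ Y) ≤ delta m G X + delta m G Y := by
  have hcard : ((X ∪ Y).ncard : ℤ) + (X ∩ Y).ncard = X.ncard + Y.ncard := by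
    exact_mod_cast ncard_union_add_ncard_inter X Y hX hY
  have hedges := ncard_adjPairs_add_le (G := G) hX hY
  rw [← two_mul_edgeCount hX, ← two_mul_edgeCount hY, ← two_mul_edgeCount (hX.union hY),
    ← two_mul_edgeCount (hX.inter_of_left Y)] at hedges
  zify at hedges
  simp only [delta]
  nlinarith

lemma edgeCount_image (φ : H ↪g G) (A : Set U) :
    edgeCount G (φ '' A) = edgeCount H A := by
  have : adjPairs G (φ '' A) = Prod.map φ φ '' adjPairs H A := by
    ext ⟨x, y⟩
    simp only [adjPairs, mem_image, mem_ofPred_eq, Prod.exists, Prod.map, Prod.mk.injEq]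
    constructor
    · rintro ⟨⟨a, ha, rfl⟩, ⟨b, hb, rfl⟩, hab⟩
      exact ⟨a, b, ⟨ha, hb, φ.map_adj_iff.1 hab⟩, rfl, rfl⟩
    · rintro ⟨a, b, ⟨ha, hb, hab⟩, rfl, rfl⟩
      exact ⟨⟨a, ha, rfl⟩, ⟨b, hb, rfl⟩, φ.map_adj_iff.2 hab⟩
  simp only [edgeCount]
  rw [← adjPairs, ← adjPairs, this, ncard_image_of_injective _ (φ.injective.prodMap φ.injective)]

lemma delta_image (φ : H ↪g G) (A : Set U) : delta m G (φ '' A) = delta m H A := by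
  rw [delta, delta, edgeCount_image, ncard_image_of_injective _ φ.injective]

lemma delta_empty : delta m G ∅ = 0 := by
  simp [delta, edgeCount]

lemma inK0_bot {W : Type*} : InK0 m (⊥ : SimpleGraph W) := fun A => by
  simp only [delta, edgeCount, bot_adj, and_false, ofPred_false, ncard_empty, Nat.zero_div,
    Nat.cast_zero, sub_zero]
  positivity

end Delta

section SelfSuff

variable {U V : Type*} {m : ℕ} {H : SimpleGraph U} {G : SimpleGraph V}

lemma SelfSuff.of_subset_right {A B C : Set V} (h : SelfSuff m G A C) (hAB : A ⊆ B)
    (hBC : B ⊆ C) : SelfSuff m G A B :=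
  ⟨hAB, fun X hX hAX hXB => h.2 X hX hAX (hXB.trans hBC)⟩

lemma SelfSuff.trans {A B C : Set V} (hAB : SelfSuff m G A B) (hBC : SelfSuff m G B C)
    (hB : B.Finite) : SelfSuff m G A C := by
  refine ⟨hAB.1.trans hBC.1, fun X hX hAX hXC => ?_⟩
  calc delta m G A ≤ delta m G (X ∩ B) :=
        hAB.2 _ (hX.inter_of_left B) (subset_inter hAX hAB.1) inter_subset_right
    _ ≤ delta m G X := by
        have := delta_union_add_delta_inter_le (m := m) (G := G) hX hB
        have := hBC.2 (X ∪ B) (hX.union hB) subset_union_right (union_subset hXC hBC.1)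
        linarith

lemma selfSuff_image_iff (φ : H ↪g G) {A B : Set U} :
    SelfSuff m G (φ '' A) (φ '' B) ↔ SelfSuff m H A B := by
  constructor
  · rintro ⟨hAB, h⟩
    refine ⟨(image_subset_image_iff φ.injective).1 hAB, fun X hX hAX hXB => ?_⟩
    simpa only [delta_image] using h (φ '' X) (hX.image φ) (image_mono hAX) (image_mono hXB)
  · rintro ⟨hAB, h⟩
    refine ⟨image_mono hAB, fun X hX hAX hXB => ?_⟩
    obtain ⟨Y, hYB, rfl⟩ := subset_image_iff.1 hXB
    rw [delta_image, delta_image]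
    exact h Y (hX.of_finite_image φ.injective.injOn)
      ((image_subset_image_iff φ.injective).1 hAX) hYB

end SelfSuff

namespace IsGeneric

variable {m : ℕ} {V : Type} {G : SimpleGraph V}

lemma nonempty (hG : IsGeneric m G) : Nonempty V := by
  obtain ⟨s, -, -, ⟨e⟩⟩ := hG.2.2 Unit inferInstance ⊥ inK0_bot
  exact ⟨e ()⟩

lemma selfSuff_empty (hG : IsGeneric m G) : SelfSuff m G ∅ univ := by
  obtain ⟨s, -, hs, ⟨e⟩⟩ := hG.2.2 Empty inferInstance ⊥ inK0_bot
  rwa [eq_empty_iff_forall_notMem.2 fun v hv => (e.symm ⟨v, hv⟩).elim] at hs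

lemma delta_nonneg (hG : IsGeneric m G) {C : Set V} (hC : C.Finite) : 0 ≤ delta m G C := by
  simpa [delta_empty] using hG.selfSuff_empty.2 C hC (empty_subset C) (subset_univ C)

lemma inK0_induce (hG : IsGeneric m G) {B : Set V} (hB : B.Finite) : InK0 m (G.induce B) :=
  fun S => by
    rw [← delta_image (Embedding.induce B)]
    exact hG.delta_nonneg (hB.subset (Subtype.coe_image_subset B S))

lemma exists_selfSuff_superset (hG : IsGeneric m G) {C : Set V} (hC : C.Finite) :
    ∃ D, C ⊆ D ∧ D.Finite ∧ SelfSuff m G D univ := by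
  obtain ⟨F, hFfin, hFsucc, hFself, hFunion⟩ := hG.1
  obtain ⟨n, hn⟩ := (monotone_nat_of_le_succ hFsucc).directed_le
    |>.exists_mem_subset_of_finset_subset_biUnion (s := hC.toFinset) (by simp [hFunion])
  exact ⟨F n, by simpa using hn, hFfin n, hFself n⟩

end IsGeneric

structure SimpleGraph.PartialIso {V W : Type*} (G : SimpleGraph V) (G' : SimpleGraph W) where
  dom : Set V
  cod : Set W
  iso : G.induce dom ≃g G'.induce cod

namespace SimpleGraph.PartialIso

variable {V W : Type*} {G : SimpleGraph V} {G' : SimpleGraph W}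

instance : Preorder (G.PartialIso G') where
  le p q := p.dom ⊆ q.dom ∧
    ∀ v (hp : v ∈ p.dom) (hq : v ∈ q.dom), (q.iso ⟨v, hq⟩ : W) = p.iso ⟨v, hp⟩
  le_refl p := ⟨subset_rfl, fun _ _ _ => rfl⟩
  le_trans p q r hpq hqr :=
    ⟨hpq.1.trans hqr.1, fun v hp hr => (hqr.2 v (hpq.1 hp) hr).trans (hpq.2 v hp _)⟩

lemma dom_mono {p q : G.PartialIso G'} (h : p ≤ q) : p.dom ⊆ q.dom := h.1

lemma iso_eq_of_le {p q : G.PartialIso G'} (h : p ≤ q) {v : V} (hp : v ∈ p.dom)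
    (hq : v ∈ q.dom) : (q.iso ⟨v, hq⟩ : W) = p.iso ⟨v, hp⟩ :=
  h.2 v hp hq

def symm (p : G.PartialIso G') : G'.PartialIso G := ⟨p.cod, p.dom, p.iso.symm⟩

lemma symm_le_symm {p q : G.PartialIso G'} (h : p ≤ q) : p.symm ≤ q.symm := by
  have hq (w : W) (hw : w ∈ p.cod) :
      q.iso ⟨p.iso.symm ⟨w, hw⟩, h.1 (p.iso.symm ⟨w, hw⟩).2⟩ = w := by
    rw [iso_eq_of_le h (p.iso.symm ⟨w, hw⟩).2]
    simp
  refine ⟨fun w hw => hq w hw ▸ Subtype.coe_prop _,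
    fun w (hp : w ∈ p.cod) (hq' : w ∈ q.cod) => ?_⟩
  have : q.iso.symm ⟨w, hq'⟩ = ⟨p.iso.symm ⟨w, hp⟩, h.1 (Subtype.coe_prop _)⟩ :=
    q.iso.symm_apply_eq.2 (Subtype.ext (hq w hp).symm)
  exact congrArg Subtype.val this

theorem nonempty_iso_of_monotone {p : ℕ → G.PartialIso G'} (hp : Monotone p)
    (hdom : ∀ v, ∃ n, v ∈ (p n).dom) (hcod : ∀ w, ∃ n, w ∈ (p n).cod) :
    Nonempty (G ≃g G') := by
  choose n hn using hdom
  let f : V → W := fun v => (p (n v)).iso ⟨v, hn v⟩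
  have hf (i : ℕ) (v : V) (hv : v ∈ (p i).dom) : f v = (p i).iso ⟨v, hv⟩ := by
    rcases le_total (n v) i with h | h
    · exact (iso_eq_of_le (hp h) (hn v) hv).symm
    · exact iso_eq_of_le (hp h) hv (hn v)
  have hcommon (u v : V) : ∃ i, u ∈ (p i).dom ∧ v ∈ (p i).dom :=
    ⟨max (n u) (n v), dom_mono (hp (le_max_left ..)) (hn u),
      dom_mono (hp (le_max_right ..)) (hn v)⟩
  have hinj : f.Injective := fun u v huv => by
    obtain ⟨i, hu, hv⟩ := hcommon u v
    rw [hf i u hu, hf i v hv] at huv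
    simpa using (p i).iso.injective (Subtype.ext huv)
  have hsurj : f.Surjective := fun w => by
    obtain ⟨i, hw⟩ := hcod w
    refine ⟨(p i).iso.symm ⟨w, hw⟩, ?_⟩
    rw [hf i _ (Subtype.coe_prop _)]
    simp
  refine ⟨⟨Equiv.ofBijective f ⟨hinj, hsurj⟩, fun {u v} => ?_⟩⟩
  obtain ⟨i, hu, hv⟩ := hcommon u v
  change G'.Adj (f u) (f v) ↔ G.Adj u v
  rw [hf i u hu, hf i v hv]
  exact (p i).iso.map_adj_iff

theorem nonempty_iso_of_backAndForth [Countable V] [Nonempty V] [Countable W] [Nonempty W]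
    (P : G.PartialIso G' → Prop) {p₀ : G.PartialIso G'} (h₀ : P p₀)
    (step : ∀ p, P p → ∀ v w, ∃ q, P q ∧ p ≤ q ∧ v ∈ q.dom ∧ w ∈ q.cod) :
    Nonempty (G ≃g G') := by
  obtain ⟨xs, hxs⟩ := exists_surjective_nat V
  obtain ⟨ys, hys⟩ := exists_surjective_nat W
  choose! next hnextP hle hdom hcod using step
  let p : ℕ → G.PartialIso G' := fun n => Nat.rec p₀ (fun k q => next q (xs k) (ys k)) n
  have hP (n : ℕ) : P (p n) := by
    induction n with
    | zero => exact h₀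
    | succ k ih => exact hnextP _ ih _ _
  refine nonempty_iso_of_monotone (monotone_nat_of_le_succ fun k => hle _ (hP k) _ _)
    (fun v => ?_) (fun w => ?_)
  · obtain ⟨k, rfl⟩ := hxs v
    exact ⟨k + 1, hdom _ (hP k) _ _⟩
  · obtain ⟨k, rfl⟩ := hys w
    exact ⟨k + 1, hcod _ (hP k) _ _⟩

end SimpleGraph.PartialIso

namespace IsGeneric

variable {m : ℕ} {V W : Type} {G : SimpleGraph V} {G' : SimpleGraph W}

theorem exists_le_partialIso_dom_eq (hG' : IsGeneric m G') (p : G.PartialIso G')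
    (hcod : p.cod.Finite) (hcodS : SelfSuff m G' p.cod univ) {B : Set V} (hB : B.Finite)
    (hK0 : InK0 m (G.induce B)) (hdomB : SelfSuff m G p.dom B) :
    ∃ q : G.PartialIso G', p ≤ q ∧ q.dom = B ∧ q.cod.Finite ∧ SelfSuff m G' q.cod univ := by
  have := hB.fintype
  have : Finite p.dom := (hB.subset hdomB.1).to_subtype
  obtain ⟨t, ht, htS, ⟨f⟩⟩ := hG'.2.2 B inferInstance (G.induce B) hK0
  let ι := G.induceHomOfLE hdomB.1
  let r : G.induce B ↪g G' := (Embedding.induce t).comp f.toEmbedding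
  have hι : SelfSuff m (G.induce B) (range ι) univ := by
    rw [← selfSuff_image_iff (Embedding.induce B), image_univ, ← range_comp]
    convert hdomB using 1 <;> exact Subtype.range_coe
  have hr : range r = t := by
    rw [RelEmbedding.coe_trans, range_comp, RelIso.coe_toRelEmbedding, f.surjective.range_eq,
      image_univ]
    exact Subtype.range_coe
  have hrι : SelfSuff m G' (range (r.comp ι)) univ := by
    rw [← hr, ← image_univ] at htS ht
    rw [RelEmbedding.coe_trans, range_comp]
    exact ((selfSuff_image_iff r).2 hι).trans htS ht
  obtain ⟨g, hg⟩ := hG'.2.1 _ _ (finite_range _) hcod hrι hcodS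
    (p.iso.comp (r.comp ι).isoInduceRange.symm)
  refine ⟨⟨B, g '' t, (g.induce g.injective.injOn.bijOn_image).comp f⟩,
    ⟨hdomB.1, fun v hv hvB => ?_⟩, rfl, ht.image g, ?_⟩
  · have hsymm : (r.comp ι).isoInduceRange.symm ⟨r.comp ι ⟨v, hv⟩, mem_range_self _⟩ =
        ⟨v, hv⟩ := (r.comp ι).isoInduceRange.symm_apply_eq.2 rfl
    have := hg ⟨r.comp ι ⟨v, hv⟩, mem_range_self _⟩
    rwa [Iso.coe_comp, Function.comp_apply, hsymm] at this
  · have := (selfSuff_image_iff g.toEmbedding (m := m)).2 htS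
    simpa using this

end IsGeneric

namespace SimpleGraph.PartialIso

variable {m : ℕ} {V W : Type} {G : SimpleGraph V} {G' : SimpleGraph W}

def empty : G.PartialIso G' :=
  ⟨∅, ∅, ⟨Equiv.equivOfIsEmpty _ _, fun {a} => isEmptyElim a⟩⟩

structure IsStrong (m : ℕ) (p : G.PartialIso G') : Prop where
  dom_finite : p.dom.Finite
  cod_finite : p.cod.Finite
  dom_selfSuff : SelfSuff m G p.dom univ
  cod_selfSuff : SelfSuff m G' p.cod univ

lemma IsStrong.symm {p : G.PartialIso G'} (hp : p.IsStrong m) : p.symm.IsStrong m :=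
  ⟨hp.cod_finite, hp.dom_finite, hp.cod_selfSuff, hp.dom_selfSuff⟩

lemma isStrong_empty (hG : IsGeneric m G) (hG' : IsGeneric m G') :
    (empty : G.PartialIso G').IsStrong m :=
  ⟨finite_empty, finite_empty, hG.selfSuff_empty, hG'.selfSuff_empty⟩

lemma IsStrong.exists_le_mem_dom (hG : IsGeneric m G) (hG' : IsGeneric m G')
    {p : G.PartialIso G'} (hp : p.IsStrong m) (v : V) :
    ∃ q : G.PartialIso G', q.IsStrong m ∧ p ≤ q ∧ v ∈ q.dom := by
  obtain ⟨B, hvB, hB, hBS⟩ := hG.exists_selfSuff_superset (hp.dom_finite.insert v)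
  obtain ⟨q, hpq, rfl, hq, hqS⟩ := hG'.exists_le_partialIso_dom_eq p hp.cod_finite
    hp.cod_selfSuff hB (hG.inK0_induce hB)
    (hp.dom_selfSuff.of_subset_right ((subset_insert v _).trans hvB) (subset_univ B))
  exact ⟨q, ⟨hB, hq, hBS, hqS⟩, hpq, hvB (mem_insert v _)⟩

lemma IsStrong.exists_le_mem_dom_mem_cod (hG : IsGeneric m G) (hG' : IsGeneric m G')
    {p : G.PartialIso G'} (hp : p.IsStrong m) (v : V) (w : W) :
    ∃ q : G.PartialIso G', q.IsStrong m ∧ p ≤ q ∧ v ∈ q.dom ∧ w ∈ q.cod := by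
  obtain ⟨q, hq, hpq, hv⟩ := hp.exists_le_mem_dom hG hG' v
  obtain ⟨r, hr, hqr, hw⟩ := hq.symm.exists_le_mem_dom hG' hG w
  exact ⟨r.symm, hr.symm, hpq.trans (symm_le_symm hqr), dom_mono (symm_le_symm hqr) hv, hw⟩

end SimpleGraph.PartialIso

theorem generic_unique_general (m : ℕ) (V V' : Type)
    [Countable V] [Countable V']
    (G : SimpleGraph V) (G' : SimpleGraph V')
    (hG : IsGeneric m G) (hG' : IsGeneric m G') :
    Nonempty (G ≃g G') := by
  have := hG.nonempty
  have := hG'.nonempty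
  exact PartialIso.nonempty_iso_of_backAndForth (fun p => p.IsStrong m)
    (PartialIso.isStrong_empty hG hG') fun p hp => hp.exists_le_mem_dom_mem_cod hG hG'

/-- Uniqueness of the `(K₀,≤)`-generic structure: any two countably infinite
`(K₀,≤)`-generic graphs are isomorphic. -/
theorem generic_unique (m : ℕ) (hm : 2 ≤ m) (V V' : Type)
    [Countable V] [Infinite V] [Countable V'] [Infinite V']
    (G : SimpleGraph V) (G' : SimpleGraph V')
    (hG : IsGeneric m G) (hG' : IsGeneric m G') :
    Nonempty (G ≃g G') :=
  generic_unique_general m V V' G G' hG hG'
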